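/- For every positive integer k, ((1/x_n) δ_{x_n}²)^k G_n(x) = ∏_{m=1}^k (𝒟 + m)² G_n(x), where 𝒟 = δ_{x_1} + ... + δ_{x_n}. -/

import Mathlib

/-- Coefficient function of `G_n(x) = ∑_{ℓ∈ℕⁿ} (|ℓ|!/ℓ!)² x^ℓ`. -/
noncomputable def Gcoeff (n : ℕ) (ℓ : Fin n →₀ ℕ) : ℂ :=
  (((∑ j, ℓ j).factorial : ℂ) / ∏ j, ((ℓ j).factorial : ℂ)) ^ 2

/-- The Euler operator `δ_{x_j} = x_j ∂/∂x_j` on coefficient functions. -/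
noncomputable def eulerOp {n : ℕ} (j : Fin n) (f : (Fin n →₀ ℕ) → ℂ) :
    (Fin n →₀ ℕ) → ℂ :=
  fun ℓ => (ℓ j : ℂ) * f ℓ

/-- `𝒟 = δ_{x_1} + ⋯ + δ_{x_n}`. -/
noncomputable def DOp {n : ℕ} (f : (Fin n →₀ ℕ) → ℂ) : (Fin n →₀ ℕ) → ℂ :=
  fun ℓ => ∑ j, eulerOp j f ℓ

/-- The operator `𝒟 + m`. -/
noncomputable def shiftOp {n : ℕ} (m : ℕ) (f : (Fin n →₀ ℕ) → ℂ) :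
    (Fin n →₀ ℕ) → ℂ :=
  fun ℓ => DOp f ℓ + (m : ℂ) * f ℓ

/-- The operator `∏_{m=1}^k (𝒟 + m)²`. -/
noncomputable def prodShiftOp {n : ℕ} : ℕ → ((Fin n →₀ ℕ) → ℂ) → ((Fin n →₀ ℕ) → ℂ)
  | 0, f => f
  | k + 1, f => shiftOp (k + 1) (shiftOp (k + 1) (prodShiftOp k f))

/-- The operator `(1/x_j) δ_{x_j}²` on coefficient functions. -/
noncomputable def invXDelSq {n : ℕ} (j : Fin n) (f : (Fin n →₀ ℕ) → ℂ) :
    (Fin n →₀ ℕ) → ℂ :=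
  fun ℓ => ((ℓ j : ℂ) + 1) ^ 2 * f (ℓ + Finsupp.single j 1)

/-!
Both sides act diagonally on the coefficients of `G_n`: each multiplies the coefficient of `x^ℓ`
by `((|ℓ| + 1) ⋯ (|ℓ| + k))²`. For `∏ (𝒟 + m)²` this is immediate, since `𝒟` multiplies
`x^ℓ` by `|ℓ|`. For the left side it follows by induction on `k` from the recursion
`(ℓ_j + 1)² c(ℓ + e_j) = (|ℓ| + 1)² c(ℓ)` satisfied by the coefficients `c(ℓ) = (|ℓ|!/ℓ!)²`.
-/

open Finsupp

section AddSingle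

variable {ι : Type*} [Fintype ι] [DecidableEq ι]

lemma sum_add_single_one_apply (ℓ : ι →₀ ℕ) (j : ι) :
    ∑ i, (ℓ + single j 1 : ι →₀ ℕ) i = ∑ i, ℓ i + 1 := by
  simp [Finset.sum_add_distrib, single_apply]

lemma prod_factorial_add_single_one_apply (ℓ : ι →₀ ℕ) (j : ι) :
    ∏ i, ((ℓ + single j 1 : ι →₀ ℕ) i).factorial = (ℓ j + 1) * ∏ i, (ℓ i).factorial := by
  have off_j : ∀ i ∈ ({j}ᶜ : Finset ι),
      ((ℓ + single j 1 : ι →₀ ℕ) i).factorial = (ℓ i).factorial := by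
    intro i hi
    rw [Finsupp.add_apply, single_eq_of_ne (by simpa using hi), add_zero]
  rw [Fintype.prod_eq_mul_prod_compl j, Finset.prod_congr rfl off_j,
    Fintype.prod_eq_mul_prod_compl j (fun i => (ℓ i).factorial), Finsupp.add_apply, single_eq_same,
    Nat.factorial_succ, mul_assoc]

end AddSingle

lemma Gcoeff_add_single_one (n : ℕ) (ℓ : Fin n →₀ ℕ) (j : Fin n) :
    ((ℓ j : ℂ) + 1) ^ 2 * Gcoeff n (ℓ + single j 1) =
      ((∑ i, ℓ i : ℕ) + 1 : ℂ) ^ 2 * Gcoeff n ℓ := by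
  have hprod : (∏ i, ((ℓ i).factorial : ℂ)) ≠ 0 :=
    Finset.prod_ne_zero_iff.mpr fun i _ => Nat.cast_ne_zero.mpr (Nat.factorial_ne_zero _)
  have hj : (ℓ j : ℂ) + 1 ≠ 0 := Nat.cast_add_one_ne_zero _
  unfold Gcoeff
  rw [← Nat.cast_prod, prod_factorial_add_single_one_apply, sum_add_single_one_apply,
    Nat.factorial_succ]
  push_cast
  field_simp

lemma invXDelSq_iterate_Gcoeff_apply (n : ℕ) (j : Fin n) (k : ℕ) (ℓ : Fin n →₀ ℕ) :
    (invXDelSq j)^[k] (Gcoeff n) ℓ =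
      ((∑ i, ℓ i + 1).ascFactorial k : ℂ) ^ 2 * Gcoeff n ℓ := by
  induction k generalizing ℓ with
  | zero => simp
  | succ k ih =>
    have hasc := Nat.succ_ascFactorial (∑ i, ℓ i + 1) k
    rw [Function.iterate_succ_apply', invXDelSq, ih, sum_add_single_one_apply, mul_left_comm,
      Gcoeff_add_single_one, Nat.ascFactorial_succ, ← hasc]
    push_cast
    ring

section Operators

variable {n : ℕ}

lemma DOp_apply (f : (Fin n →₀ ℕ) → ℂ) (ℓ : Fin n →₀ ℕ) :
    DOp f ℓ = (∑ i, ℓ i : ℕ) * f ℓ := by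
  simp only [DOp, eulerOp, ← Finset.sum_mul, Nat.cast_sum]

lemma shiftOp_apply (m : ℕ) (f : (Fin n →₀ ℕ) → ℂ) (ℓ : Fin n →₀ ℕ) :
    shiftOp m f ℓ = (∑ i, ℓ i + m : ℕ) * f ℓ := by
  rw [shiftOp, DOp_apply, Nat.cast_add, add_mul]

lemma prodShiftOp_apply (k : ℕ) (f : (Fin n →₀ ℕ) → ℂ) (ℓ : Fin n →₀ ℕ) :
    prodShiftOp k f ℓ = ((∑ i, ℓ i + 1).ascFactorial k : ℂ) ^ 2 * f ℓ := by
  induction k with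
  | zero => simp [prodShiftOp]
  | succ k ih =>
    rw [prodShiftOp, shiftOp_apply, shiftOp_apply, ih, Nat.ascFactorial_succ]
    push_cast
    ring

end Operators

theorem invXDelSq_iterate_eq_prodShiftOp_general (n k : ℕ) :
    (invXDelSq (Fin.last n))^[k] (Gcoeff (n + 1)) =
      prodShiftOp k (Gcoeff (n + 1)) := by
  funext ℓ
  rw [invXDelSq_iterate_Gcoeff_apply, prodShiftOp_apply]

/-- For every `k ≥ 1`, `((1/x_n) δ_{x_n}²)^k G_n = ∏_{m=1}^k (𝒟 + m)² G_n`. -/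
theorem invXDelSq_iterate_eq_prodShiftOp (n k : ℕ) (hk : 1 ≤ k) :
    (invXDelSq (Fin.last n))^[k] (Gcoeff (n + 1)) =
      prodShiftOp k (Gcoeff (n + 1)) :=
  invXDelSq_iterate_eq_prodShiftOp_general n k
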